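/- Under the hypotheses of the Lyapunov derivative identity for the full error dynamics (P symmetric, J = diag(J₁,J₂,J₃) with positive entries, k_R, k_ω > 0, D = diag(2ζᵢΩᵢ), K = diag(Ωᵢ²) with ζᵢ, Ωᵢ > 0, and (R_e, e_ω, M_e) a solution of Ṙ_e = R_e ê_ω, J ė_ω = −k_R e_R(R_e) − k_ω e_ω + M_e, M̈_e + D Ṁ_e + K M_e = 0), suppose in addition that there are constants M₀ ≥ 0 and λ > 0 with ‖M_e(t)‖ ≤ M₀ e^{−λ t} for all t ≥ 0. Then the Lyapunov function V(t) = k_R ψ(R_e(t)) + ½ e_ω(t)ᵀ J e_ω(t) + ½ M_e(t)ᵀ K M_e(t) + ½ ‖Ṁ_e(t)‖² satisfies, for all t ≥ 0, dV/dt ≤ −‖e_ω(t)‖ ( k_ω ‖e_ω(t)‖ − M₀ e^{−λ t} ) − Ṁ_e(t)ᵀ D Ṁ_e(t). -/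

import Mathlib

/-!
Along the error dynamics the attitude term of `V` changes at rate `k_R e_ω ⬝ e_R(R_e)`: this comes
from `tr(A ê) = -ω ⬝ vee(A - Aᵀ)` and the symmetry of `P`. It cancels the `-k_R e_R` of
`J ė_ω`, and the two `M_eᵀ K Ṁ_e` terms cancel as well, leaving
`V̇ = -k_ω ‖e_ω‖² + e_ω ⬝ M_e - Ṁ_eᵀ D Ṁ_e`. Cauchy–Schwarz and the decay of `M_e` give the bound.
-/

open Matrix

attribute [local instance] Matrix.normedAddCommGroup Matrix.normedSpace

/-- The hat map sending `v ∈ ℝ³` to the skew-symmetric matrix `v̂` with `v̂ w = v × w`. -/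
def hat (v : Fin 3 → ℝ) : Matrix (Fin 3) (Fin 3) ℝ :=
  !![0, -v 2, v 1; v 2, 0, -v 0; -v 1, v 0, 0]

/-- `SO(3)`: real 3×3 matrices with `RᵀR = I` and `det R = 1`. -/
def SO3 : Set (Matrix (Fin 3) (Fin 3) ℝ) := {R | Rᵀ * R = 1 ∧ R.det = 1}

/-- The vee map, inverse of the hat map on skew-symmetric matrices. -/
def vee (A : Matrix (Fin 3) (Fin 3) ℝ) : Fin 3 → ℝ :=
  ![A 2 1, A 0 2, A 1 0]

/-- The configuration error function `ψ(R) = ½ tr(P(I − R))`. -/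
noncomputable def ψ (P R : Matrix (Fin 3) (Fin 3) ℝ) : ℝ :=
  (1 / 2 : ℝ) * (P * (1 - R)).trace

/-- The attitude error vector `e_R(R) = vee(½(PR − RᵀP))`. -/
noncomputable def eR (P R : Matrix (Fin 3) (Fin 3) ℝ) : Fin 3 → ℝ :=
  vee ((1 / 2 : ℝ) • (P * R - Rᵀ * P))

/-- The Euclidean norm on `ℝ³`. -/
noncomputable def enorm (v : Fin 3 → ℝ) : ℝ := Real.sqrt (v ⬝ᵥ v)

section Derivatives

variable {n : Type*} [Fintype n] {t : ℝ}

theorem HasDerivAt.dotProduct {f g : ℝ → n → ℝ} {f' g' : n → ℝ}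
    (hf : HasDerivAt f f' t) (hg : HasDerivAt g g' t) :
    HasDerivAt (fun s => f s ⬝ᵥ g s) (f' ⬝ᵥ g t + f t ⬝ᵥ g') t := by
  simpa only [_root_.dotProduct, ← Finset.sum_add_distrib] using
    HasDerivAt.fun_sum fun i _ => (hasDerivAt_pi.1 hf i).fun_mul (hasDerivAt_pi.1 hg i)

theorem HasDerivAt.mulVec {m : Type*} (A : Matrix m n ℝ) {f : ℝ → n → ℝ} {f' : n → ℝ}
    (hf : HasDerivAt f f' t) : HasDerivAt (fun s => A *ᵥ f s) (A *ᵥ f') t :=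
  hasDerivAt_pi.2 fun i => by
    simpa [Matrix.mulVec] using (hasDerivAt_const t (A i)).dotProduct hf

theorem dotProduct_mulVec_comm {A : Matrix n n ℝ} (hA : A.IsSymm) (v w : n → ℝ) :
    v ⬝ᵥ A *ᵥ w = w ⬝ᵥ A *ᵥ v := by
  rw [dotProduct_mulVec, ← vecMul_transpose, hA.eq, dotProduct_comm]

theorem HasDerivAt.half_quadForm {A : Matrix n n ℝ} (hA : A.IsSymm) {f : ℝ → n → ℝ}
    {f' : n → ℝ} (hf : HasDerivAt f f' t) :
    HasDerivAt (fun s => (1 / 2 : ℝ) * (f s ⬝ᵥ A *ᵥ f s)) (f t ⬝ᵥ A *ᵥ f') t :=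
  ((hf.dotProduct (hf.mulVec A)).const_mul (1 / 2 : ℝ)).congr_deriv <| by
    rw [dotProduct_mulVec_comm hA f']
    ring

theorem HasDerivAt.trace_mul (A : Matrix n n ℝ) {R : ℝ → Matrix n n ℝ}
    {R' : Matrix n n ℝ} (hR : HasDerivAt R R' t) :
    HasDerivAt (fun s => (A * R s).trace) (A * R').trace t := by
  simpa [trace, mul_apply, _root_.dotProduct] using
    HasDerivAt.fun_sum (u := Finset.univ) fun i _ => (hasDerivAt_const t (A i)).dotProduct
      (hasDerivAt_pi.2 fun j => hasDerivAt_pi.1 (hasDerivAt_pi.1 hR j) i)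

end Derivatives

theorem trace_mul_hat (A : Matrix (Fin 3) (Fin 3) ℝ) (ω : Fin 3 → ℝ) :
    (A * hat ω).trace = -(ω ⬝ᵥ vee (A - Aᵀ)) := by
  simp only [trace, diag_apply, mul_apply, Fin.sum_univ_three, hat, vee, dotProduct, of_apply,
    cons_val', cons_val_zero, cons_val_one, cons_val, cons_val_fin_one, Matrix.sub_apply, transpose_apply]
  ring

theorem dotProduct_eR {P : Matrix (Fin 3) (Fin 3) ℝ} (hP : P.IsSymm)
    (R : Matrix (Fin 3) (Fin 3) ℝ) (ω : Fin 3 → ℝ) :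
    ω ⬝ᵥ eR P R = -(1 / 2) * (P * (R * hat ω)).trace := by
  rw [← mul_assoc, trace_mul_hat, transpose_mul, hP.eq]
  simp only [eR, vee, dotProduct, Fin.sum_univ_three, Matrix.smul_apply, Matrix.sub_apply, smul_eq_mul,
    cons_val_zero, cons_val_one, cons_val]
  ring

theorem HasDerivAt.ψ {P : Matrix (Fin 3) (Fin 3) ℝ} (hP : P.IsSymm)
    {R : ℝ → Matrix (Fin 3) (Fin 3) ℝ} {ω : Fin 3 → ℝ} {t : ℝ}
    (hR : HasDerivAt R (R t * hat ω) t) :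
    HasDerivAt (fun s => ψ P (R s)) (ω ⬝ᵥ eR P (R t)) t := by
  have hψ : (fun s => _root_.ψ P (R s)) = fun s => 1 / 2 * (P.trace - (P * R s).trace) := by
    funext s
    rw [_root_.ψ, mul_sub, mul_one, trace_sub]
  rw [hψ, dotProduct_eR hP]
  exact (((hR.trace_mul P).const_sub P.trace).const_mul (1 / 2 : ℝ)).congr_deriv (by ring)

theorem dotProduct_le_enorm_mul_enorm (v w : Fin 3 → ℝ) :
    v ⬝ᵥ w ≤ _root_.enorm v * _root_.enorm w := by
  have hcs : (v ⬝ᵥ w) ^ 2 ≤ (v ⬝ᵥ v) * (w ⬝ᵥ w) := by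
    simpa only [dotProduct, sq] using Finset.sum_mul_sq_le_sq_mul_sq Finset.univ v w
  have hv : 0 ≤ v ⬝ᵥ v := Finset.sum_nonneg fun i _ => mul_self_nonneg (v i)
  rw [_root_.enorm, _root_.enorm, ← Real.sqrt_mul hv]
  exact (le_abs_self _).trans (Real.abs_le_sqrt hcs)

theorem hasDerivAt_lyapunov {P J D K : Matrix (Fin 3) (Fin 3) ℝ} (hP : P.IsSymm)
    (hJ : J.IsSymm) (hK : K.IsSymm) {kR kω t : ℝ} {Re : ℝ → Matrix (Fin 3) (Fin 3) ℝ}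
    {eω Me Me' : ℝ → Fin 3 → ℝ} {eω' Me'' : Fin 3 → ℝ}
    (hRe : HasDerivAt Re (Re t * hat (eω t)) t) (heω : HasDerivAt eω eω' t)
    (hMe : HasDerivAt Me (Me' t) t) (hMe' : HasDerivAt Me' Me'' t)
    (hdyn : J *ᵥ eω' = -(kR • eR P (Re t)) - kω • eω t + Me t)
    (hMdyn : Me'' + D *ᵥ Me' t + K *ᵥ Me t = 0) :
    HasDerivAt
      (fun s => kR * ψ P (Re s) + (1 / 2 : ℝ) * (eω s ⬝ᵥ (J *ᵥ eω s))
        + (1 / 2 : ℝ) * (Me s ⬝ᵥ (K *ᵥ Me s)) + (1 / 2 : ℝ) * (Me' s ⬝ᵥ Me' s))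
      (-(kω * (eω t ⬝ᵥ eω t)) + eω t ⬝ᵥ Me t - Me' t ⬝ᵥ (D *ᵥ Me' t)) t := by
  have hMe'' : Me'' = -(D *ᵥ Me' t) - K *ᵥ Me t := by
    linear_combination (norm := module) hMdyn
  refine ((((hRe.ψ hP).const_mul kR).add (heω.half_quadForm hJ)).add
    (hMe.half_quadForm hK) |>.add ((hMe'.dotProduct hMe').const_mul (1 / 2))).congr_deriv ?_
  rw [hdyn, hMe'', dotProduct_comm _ (Me' t), dotProduct_mulVec_comm hK (Me t)]
  simp only [dotProduct_add, dotProduct_sub, dotProduct_neg, dotProduct_smul, smul_eq_mul]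
  ring

theorem lyapunov_derivative_bound_full_error_dynamics_general
    (P : Matrix (Fin 3) (Fin 3) ℝ) (hPsymm : P.IsSymm)
    (J₁ J₂ J₃ : ℝ) (kR kω : ℝ) (Ω₁ Ω₂ Ω₃ : ℝ)
    (J D K : Matrix (Fin 3) (Fin 3) ℝ)
    (hJ : J = Matrix.diagonal ![J₁, J₂, J₃])
    (hK : K = Matrix.diagonal ![Ω₁ ^ 2, Ω₂ ^ 2, Ω₃ ^ 2])
    (Re : ℝ → Matrix (Fin 3) (Fin 3) ℝ) (eω eω' Me Me' Me'' : ℝ → Fin 3 → ℝ)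
    (hRe : ∀ t, HasDerivAt Re (Re t * hat (eω t)) t)
    (heω : ∀ t, HasDerivAt eω (eω' t) t)
    (hMe : ∀ t, HasDerivAt Me (Me' t) t)
    (hMe' : ∀ t, HasDerivAt Me' (Me'' t) t)
    (hdyn : ∀ t, J *ᵥ eω' t = -(kR • eR P (Re t)) - kω • eω t + Me t)
    (hMdyn : ∀ t, Me'' t + D *ᵥ Me' t + K *ᵥ Me t = 0)
    (M₀ lam : ℝ)
    (hMebound : ∀ t : ℝ, 0 ≤ t → _root_.enorm (Me t) ≤ M₀ * Real.exp (-lam * t)) :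
    ∀ t : ℝ, 0 ≤ t → ∀ d : ℝ,
      HasDerivAt
        (fun s => kR * ψ P (Re s) + (1 / 2 : ℝ) * (eω s ⬝ᵥ (J *ᵥ eω s))
          + (1 / 2 : ℝ) * (Me s ⬝ᵥ (K *ᵥ Me s)) + (1 / 2 : ℝ) * (Me' s ⬝ᵥ Me' s)) d t →
      d ≤ -(_root_.enorm (eω t) * (kω * _root_.enorm (eω t) - M₀ * Real.exp (-lam * t)))
            - Me' t ⬝ᵥ (D *ᵥ Me' t) := by
  intro t ht d hd
  have hJsymm : J.IsSymm := hJ ▸ isSymm_diagonal _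
  have hKsymm : K.IsSymm := hK ▸ isSymm_diagonal _
  rw [hd.unique (hasDerivAt_lyapunov hPsymm hJsymm hKsymm (hRe t) (heω t) (hMe t) (hMe' t)
    (hdyn t) (hMdyn t))]
  have hcross : eω t ⬝ᵥ Me t ≤ _root_.enorm (eω t) * (M₀ * Real.exp (-lam * t)) :=
    (dotProduct_le_enorm_mul_enorm _ _).trans
      (mul_le_mul_of_nonneg_left (hMebound t ht) (Real.sqrt_nonneg _))
  have hsq : _root_.enorm (eω t) * _root_.enorm (eω t) = eω t ⬝ᵥ eω t :=
    Real.mul_self_sqrt (Finset.sum_nonneg fun i _ => mul_self_nonneg (eω t i))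
  linear_combination hcross + kω * hsq

/-- Lyapunov derivative bound for the full error dynamics: under the error dynamics
`Ṙ_e = R_e ê_ω`, `J ė_ω = −k_R e_R(R_e) − k_ω e_ω + M_e`, `M̈_e + D Ṁ_e + K M_e = 0`,
and the exponential bound `‖M_e(t)‖ ≤ M₀ e^{−λt}` for `t ≥ 0`, the Lyapunov function
`V = k_R ψ(R_e) + ½ e_ωᵀ J e_ω + ½ M_eᵀ K M_e + ½ ‖Ṁ_e‖²` satisfies
`V̇ ≤ −‖e_ω‖(k_ω ‖e_ω‖ − M₀ e^{−λt}) − Ṁ_eᵀ D Ṁ_e` for all `t ≥ 0`. -/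
theorem lyapunov_derivative_bound_full_error_dynamics
    (P : Matrix (Fin 3) (Fin 3) ℝ) (hPsymm : P.IsSymm)
    (J₁ J₂ J₃ : ℝ) (hJ₁ : 0 < J₁) (hJ₂ : 0 < J₂) (hJ₃ : 0 < J₃)
    (kR kω : ℝ) (hkR : 0 < kR) (hkω : 0 < kω)
    (ζ₁ ζ₂ ζ₃ Ω₁ Ω₂ Ω₃ : ℝ)
    (hζ₁ : 0 < ζ₁) (hζ₂ : 0 < ζ₂) (hζ₃ : 0 < ζ₃)
    (hΩ₁ : 0 < Ω₁) (hΩ₂ : 0 < Ω₂) (hΩ₃ : 0 < Ω₃)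
    (J D K : Matrix (Fin 3) (Fin 3) ℝ)
    (hJ : J = Matrix.diagonal ![J₁, J₂, J₃])
    (hD : D = Matrix.diagonal ![2 * ζ₁ * Ω₁, 2 * ζ₂ * Ω₂, 2 * ζ₃ * Ω₃])
    (hK : K = Matrix.diagonal ![Ω₁ ^ 2, Ω₂ ^ 2, Ω₃ ^ 2])
    (Re : ℝ → Matrix (Fin 3) (Fin 3) ℝ) (eω eω' Me Me' Me'' : ℝ → Fin 3 → ℝ)
    (hReSO3 : ∀ t, Re t ∈ SO3)
    (hRe : ∀ t, HasDerivAt Re (Re t * hat (eω t)) t)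
    (heω : ∀ t, HasDerivAt eω (eω' t) t)
    (hMe : ∀ t, HasDerivAt Me (Me' t) t)
    (hMe' : ∀ t, HasDerivAt Me' (Me'' t) t)
    (hdyn : ∀ t, J *ᵥ eω' t = -(kR • eR P (Re t)) - kω • eω t + Me t)
    (hMdyn : ∀ t, Me'' t + D *ᵥ Me' t + K *ᵥ Me t = 0)
    (M₀ lam : ℝ) (hM₀ : 0 ≤ M₀) (hlam : 0 < lam)
    (hMebound : ∀ t : ℝ, 0 ≤ t → _root_.enorm (Me t) ≤ M₀ * Real.exp (-lam * t)) :
    ∀ t : ℝ, 0 ≤ t → ∀ d : ℝ,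
      HasDerivAt
        (fun s => kR * ψ P (Re s) + (1 / 2 : ℝ) * (eω s ⬝ᵥ (J *ᵥ eω s))
          + (1 / 2 : ℝ) * (Me s ⬝ᵥ (K *ᵥ Me s)) + (1 / 2 : ℝ) * (Me' s ⬝ᵥ Me' s)) d t →
      d ≤ -(_root_.enorm (eω t) * (kω * _root_.enorm (eω t) - M₀ * Real.exp (-lam * t)))
            - Me' t ⬝ᵥ (D *ᵥ Me' t) :=
  lyapunov_derivative_bound_full_error_dynamics_general P hPsymm J₁ J₂ J₃ kR kω Ω₁ Ω₂ Ω₃ J D K hJ hK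
    Re eω eω' Me Me' Me'' hRe heω hMe hMe' hdyn hMdyn M₀ lam hMebound
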